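/- Let U be a set of words determining a nontrivial locally finite variety 𝔘 (i.e., some group with more than one element satisfies the laws U, and every finitely generated group satisfying the laws U is finite), and let V be a nontrivial set of words such that the variety 𝔙 determined by V is locally finite (i.e., every finitely generated group G with V(G) = 1 is finite). Let W be a set of words determining a subvariety 𝔚 of 𝔘 which is proper, i.e., every group satisfying the laws W satisfies the laws U, and some group satisfies the laws U but not the laws W. Then there exists a finite group H satisfying the laws U but not the laws W, and a finite group G with a subnormal subgroup H̃ isomorphic to H contained in the verbal subgroup V(G). -/

import Mathlib

universe v

/-- The verbal subgroup `V(G)` of a group `G` determined by a set `V` of words. -/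
def verbalSubgroup (G : Type*) [Group G] (V : Set (FreeGroup ℕ)) : Subgroup G :=
  Subgroup.closure {g | ∃ w ∈ V, ∃ φ : FreeGroup ℕ →* G, φ w = g}

/-- A group `K` satisfies the laws `U` if every homomorphism from the free group on
countably many generators to `K` maps every element of `U` to the identity. -/
def SatisfiesLaws (K : Type*) [Group K] (U : Set (FreeGroup ℕ)) : Prop :=
  ∀ φ : FreeGroup ℕ →* K, ∀ w ∈ U, φ w = 1

/-- A subgroup `K ≤ G` is subnormal: there is a finite chain
`K = K₀ ⊴ K₁ ⊴ ⋯ ⊴ Kₙ = G` with each term normal in the next. -/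
def IsSubnormalSubgroup {G : Type*} [Group G] (K : Subgroup G) : Prop :=
  ∃ (n : ℕ) (c : Fin (n + 1) → Subgroup G),
    c 0 = K ∧ c (Fin.last n) = ⊤ ∧
      ∀ i : Fin n, c i.castSucc ≤ c i.succ ∧ ((c i.castSucc).subgroupOf (c i.succ)).Normal

lemma satisfiesLaws_of_injective {G H : Type*} [Group G] [Group H] (f : G →* H)
    (hf : Function.Injective f) {Ws : Set (FreeGroup ℕ)} (h : SatisfiesLaws H Ws) :
    SatisfiesLaws G Ws := fun φ w hw => hf (by simpa using h (f.comp φ) w hw)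

lemma satisfiesLaws_pi {ι : Type*} {H : Type*} [Group H] {Ws : Set (FreeGroup ℕ)}
    (h : SatisfiesLaws H Ws) : SatisfiesLaws (ι → H) Ws := fun φ w hw =>
  funext fun c => h ((Pi.evalMonoidHom (fun _ => H) c).comp φ) w hw

lemma mem_verbal_of_value {G : Type*} [Group G] {V : Set (FreeGroup ℕ)} {w : FreeGroup ℕ}
    (hw : w ∈ V) (φ : FreeGroup ℕ →* G) : φ w ∈ verbalSubgroup G V :=
  Subgroup.subset_closure ⟨w, hw, φ, rfl⟩

lemma verbal_map_le {G H : Type*} [Group G] [Group H] (f : G →* H) (V : Set (FreeGroup ℕ)) :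
    (verbalSubgroup G V).map f ≤ verbalSubgroup H V := by
  rw [verbalSubgroup, MonoidHom.map_closure]
  apply Subgroup.closure_mono
  rintro _ ⟨g, ⟨w, hw, φ, rfl⟩, rfl⟩
  exact ⟨w, hw, f.comp φ, rfl⟩

lemma verbal_normal (G : Type*) [Group G] (V : Set (FreeGroup ℕ)) :
    (verbalSubgroup G V).Normal := by
  constructor
  intro n hn g
  refine verbal_map_le (MulAut.conj g).toMonoidHom V (Subgroup.mem_map.mpr ⟨n, hn, ?_⟩)
  simp [MulAut.conj]

lemma verbal_le_ker {G Q : Type*} [Group G] [Group Q] (f : G →* Q) {V : Set (FreeGroup ℕ)}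
    (hQ : SatisfiesLaws Q V) : verbalSubgroup G V ≤ f.ker := by
  rw [verbalSubgroup, Subgroup.closure_le]
  rintro _ ⟨w, hw, φ, rfl⟩
  exact MonoidHom.mem_ker.mpr (hQ (f.comp φ) w hw)

lemma exists_finset_subset_closure {G : Type*} [Group G] {S : Set G} {x : G}
    (hx : x ∈ Subgroup.closure S) :
    ∃ T : Finset G, ↑T ⊆ S ∧ x ∈ Subgroup.closure (T : Set G) := by
  classical
  induction hx using Subgroup.closure_induction with
  | mem y hy => exact ⟨{y}, by simpa using hy, Subgroup.subset_closure (by simp)⟩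
  | one => exact ⟨∅, by simp, one_mem _⟩
  | mul a b ha hb iha ihb =>
      obtain ⟨T1, hT1, h1⟩ := iha
      obtain ⟨T2, hT2, h2⟩ := ihb
      refine ⟨T1 ∪ T2, ?_, mul_mem ?_ ?_⟩
      · intro z hz
        rcases Finset.mem_union.mp (by exact_mod_cast hz) with h | h
        · exact hT1 h
        · exact hT2 h
      · exact Subgroup.closure_mono (by intro z hz; exact_mod_cast Finset.mem_union_left _ (by exact_mod_cast hz)) h1
      · exact Subgroup.closure_mono (by intro z hz; exact_mod_cast Finset.mem_union_right _ (by exact_mod_cast hz)) h2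
  | inv a ha iha =>
      obtain ⟨T, h1, h2⟩ := iha
      exact ⟨T, h1, inv_mem h2⟩

lemma freeGroup_mem_closure_range_of (x : FreeGroup ℕ) :
    x ∈ Subgroup.closure (Set.range (FreeGroup.of : ℕ → FreeGroup ℕ)) := by
  induction x using FreeGroup.induction_on with
  | C1 => exact one_mem _
  | of i => exact Subgroup.subset_closure ⟨i, rfl⟩
  | inv_of i _ => exact inv_mem (Subgroup.subset_closure ⟨i, rfl⟩)
  | mul a b ha hb => exact mul_mem ha hb

lemma list_prod_range_eq_single {M : Type*} [Monoid M] (f : ℕ → M) (i₀ : ℕ) (n : ℕ)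
    (h : ∀ j < n, j ≠ i₀ → f j = 1) :
    ((List.range n).map f).prod = if i₀ < n then f i₀ else 1 := by
  induction n with
  | zero => simp
  | succ n ih =>
    rw [List.range_succ, List.map_append, List.prod_append,
      ih (fun j hj hne => h j (by omega) hne)]
    by_cases hn : i₀ < n
    · have hne : n ≠ i₀ := by omega
      have h1 : i₀ < n + 1 := by omega
      simp [h n (by omega) hne, hn, h1]
    · by_cases he : i₀ = n
      · subst he
        have h1 : i₀ < i₀ + 1 := by omega
        simp [hn, h1]
      · have hne : n ≠ i₀ := fun hh => he hh.symm
        have h1 : ¬ i₀ < n + 1 := by omega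
        simp [h n (by omega) hne, hn, h1]

open SemidirectProduct in
lemma semidirect_pow {N G : Type*} [Group N] [Group G] {φ : G →* MulAut N} (f : N) (t : G)
    (k : ℕ) :
    (inl f * inr t : N ⋊[φ] G) ^ k
      = inl (((List.range k).map (fun i => φ (t ^ i) f)).prod) * inr (t ^ k) := by
  induction k with
  | zero => simp
  | succ k ih =>
    rw [pow_succ, ih, List.range_succ, List.map_append, List.prod_append,
      List.map_singleton, List.prod_singleton, map_mul, inl_aut, pow_succ t k, map_mul]
    simp only [mul_assoc, map_inv, inv_mul_cancel_left]

def transAut (C : Type*) [Group C] (H : Type*) [Group H] : C →* MulAut (C → H) where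
  toFun c :=
    { toFun := fun f x => f (c⁻¹ * x)
      invFun := fun f x => f (c * x)
      left_inv := fun f => funext fun x => by simp
      right_inv := fun f => funext fun x => by simp
      map_mul' := fun f g => rfl }
  map_one' := by ext f x; simp
  map_mul' c₁ c₂ := by ext f x; simp [mul_assoc]

@[simp] lemma transAut_apply {C : Type*} [Group C] {H : Type*} [Group H] (c : C) (f : C → H)
    (x : C) : transAut C H c f x = f (c⁻¹ * x) := rfl

theorem embed_construction (U V W : Set (FreeGroup ℕ)) (m : ℕ) [NeZero m]
    (hpow : ∀ (X : Type) [Group X] (g : X), g ^ m ∈ verbalSubgroup X V)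
    (hCmV : SatisfiesLaws (Multiplicative (ZMod m)) V)
    (H₀ : Type) [Group H₀] [Finite H₀] (hH₀U : SatisfiesLaws H₀ U)
    (w₀ : FreeGroup ℕ) (hw₀W : w₀ ∈ W) (ψ' : FreeGroup ℕ →* H₀) (hψ'w₀ : ψ' w₀ ≠ 1) :
    ∃ H : GrpCat.{0}, Finite ↥H ∧ SatisfiesLaws ↥H U ∧ ¬ SatisfiesLaws ↥H W ∧
      ∃ G : GrpCat.{0}, Finite ↥G ∧
        ∃ Htilde : Subgroup ↥G, IsSubnormalSubgroup Htilde ∧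
          Nonempty (↥H ≃* ↥Htilde) ∧ Htilde ≤ verbalSubgroup ↥G V := by
  classical
  set C := Multiplicative (ZMod m) with hC
  set ρ := transAut C H₀ with hρ
  haveI hGfin : Finite ((C → H₀) ⋊[ρ] C) :=
    Finite.of_injective (fun g => (g.left, g.right))
      (fun a b hab => SemidirectProduct.ext (congrArg Prod.fst hab) (congrArg Prod.snd hab))
  set Ht : Subgroup ((C → H₀) ⋊[ρ] C) := verbalSubgroup _ V with hHt
  set t₀ : C := Multiplicative.ofAdd (1 : ZMod m) with ht₀
  have ht₀pow : ∀ j : ℕ, t₀ ^ j = Multiplicative.ofAdd ((j : ZMod m)) := by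
    intro j
    rw [ht₀, ← ofAdd_nsmul]
    congr 1
    rw [nsmul_eq_mul, mul_one]
  have hdiag : ∀ h : H₀, SemidirectProduct.inl (φ := ρ) (fun _ => h) ∈ Ht := by
    intro h
    have key : (SemidirectProduct.inl (φ := ρ) (fun x => if x = 1 then h else 1) *
        SemidirectProduct.inr t₀) ^ m = SemidirectProduct.inl (fun _ => h) := by
      rw [semidirect_pow]
      have h1 : t₀ ^ m = 1 := by
        rw [ht₀pow]
        simp [ZMod.natCast_self]
      rw [h1, map_one, mul_one]
      congr 1
      funext c
      have hev := map_list_prod (Pi.evalMonoidHom (fun _ : C => H₀) c)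
        ((List.range m).map (fun i => ρ (t₀ ^ i) (fun x => if x = 1 then h else 1)))
      rw [List.map_map] at hev
      have hi₀ : (Multiplicative.toAdd c).val < m := ZMod.val_lt _
      have hiff : ∀ j, j < m → ((t₀ ^ j)⁻¹ * c = 1 ↔ j = (Multiplicative.toAdd c).val) := by
        intro j hj
        rw [inv_mul_eq_one, ht₀pow]
        constructor
        · intro hh
          have h5 : ((j : ZMod m)) = Multiplicative.toAdd c := congrArg Multiplicative.toAdd hh
          rw [← h5, ZMod.val_cast_of_lt hj]
        · intro hh
          subst hh
          have h5 : ((((Multiplicative.toAdd c).val : ℕ)) : ZMod m) = Multiplicative.toAdd c :=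
            ZMod.natCast_rightInverse _
          rw [h5]
          simp
      have hc : ((List.range m).map ((Pi.evalMonoidHom (fun _ : C => H₀) c) ∘
          (fun i => ρ (t₀ ^ i) (fun x => if x = 1 then h else 1)))).prod = h := by
        rw [list_prod_range_eq_single _ ((Multiplicative.toAdd c).val) m ?_]
        · rw [if_pos hi₀]
          show (if (t₀ ^ (Multiplicative.toAdd c).val)⁻¹ * c = 1 then h else 1) = h
          rw [if_pos ((hiff _ hi₀).mpr rfl)]
        · intro j hj hne
          show (if (t₀ ^ j)⁻¹ * c = 1 then h else 1) = 1
          rw [if_neg (fun hh => hne ((hiff j hj).mp hh))]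
      exact hev.trans hc
    have h6 := hpow ((C → H₀) ⋊[ρ] C)
      (SemidirectProduct.inl (fun x => if x = 1 then h else 1) * SemidirectProduct.inr t₀)
    rw [key] at h6
    exact h6
  have hright : ∀ x : (C → H₀) ⋊[ρ] C, x ∈ Ht → x.right = 1 := by
    intro x hx
    have h7 := verbal_le_ker (SemidirectProduct.rightHom (φ := ρ)) hCmV hx
    rw [MonoidHom.mem_ker] at h7
    exact h7
  set θ : ↥Ht →* (C → H₀) :=
    { toFun := fun x => (x : ((C → H₀) ⋊[ρ] C)).left
      map_one' := rfl
      map_mul' := by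
        rintro x y
        show ((x : ((C → H₀) ⋊[ρ] C)) * (y : ((C → H₀) ⋊[ρ] C))).left = _
        rw [SemidirectProduct.mul_left, hright _ x.2, map_one]
        rfl } with hθ
  have hθinj : Function.Injective θ := by
    intro x y hxy
    exact Subtype.ext (SemidirectProduct.ext hxy ((hright _ x.2).trans (hright _ y.2).symm))
  have hHtU : SatisfiesLaws ↥Ht U := satisfiesLaws_of_injective θ hθinj (satisfiesLaws_pi hH₀U)
  have hHtW : ¬ SatisfiesLaws ↥Ht W := by
    intro hs
    set ξ : H₀ →* ↥Ht := MonoidHom.codRestrict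
      ((SemidirectProduct.inl (φ := ρ)).comp
        { toFun := fun h => (fun _ => h : C → H₀), map_one' := rfl, map_mul' := fun _ _ => rfl })
      Ht (fun h => hdiag h) with hξ
    have h1 := hs (ξ.comp ψ') w₀ hw₀W
    apply hψ'w₀
    have h2 : ξ (ψ' w₀) = 1 := h1
    have h3 := congrArg (fun z => ((z : ↥Ht) : ((C → H₀) ⋊[ρ] C)).left) h2
    exact congrFun h3 (1 : C)
  haveI hHtfin : Finite ↥Ht := inferInstance
  haveI hnorm : Ht.Normal := verbal_normal _ V
  refine ⟨GrpCat.of ↥Ht, hHtfin, hHtU, hHtW, GrpCat.of ((C → H₀) ⋊[ρ] C), hGfin, Ht, ?_, ⟨MulEquiv.refl _⟩, le_rfl⟩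
  refine ⟨1, fun i => if i = 0 then Ht else ⊤, if_pos rfl, ?_, ?_⟩
  · have hne : (Fin.last 1) ≠ 0 := by decide
    beta_reduce
    rw [if_neg hne]
  · intro i
    have h0 : i.castSucc = 0 := by
      have hi : i = 0 := Subsingleton.elim _ _
      subst hi; rfl
    have h1 : i.succ ≠ 0 := Fin.succ_ne_zero i
    beta_reduce
    rw [h0, if_pos rfl, if_neg h1]
    exact ⟨le_top, Subgroup.Normal.subgroupOf hnorm ⊤⟩

theorem finite_group_between_varieties_with_subnormal_verbal_embedding
    (U : Set (FreeGroup ℕ))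
    -- the variety determined by `U` is nontrivial
    (hUnontriv : ∃ K : GrpCat.{0}, Nontrivial ↥K ∧ SatisfiesLaws ↥K U)
    -- the variety determined by `U` is locally finite
    (hUlf : ∀ (K : Type v) [Group K], Group.FG K → SatisfiesLaws K U → Finite K)
    (V : Set (FreeGroup ℕ)) (hV : ∃ w ∈ V, w ≠ 1)
    -- the variety determined by `V` is locally finite
    (hVlf : ∀ (K : Type v) [Group K], Group.FG K → verbalSubgroup K V = ⊥ → Finite K)
    (W : Set (FreeGroup ℕ))
    -- `𝔚` is a subvariety of `𝔘`
    (hWU : ∀ (K : Type v) [Group K], SatisfiesLaws K W → SatisfiesLaws K U)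
    -- the subvariety is proper
    (hproper : ∃ K : GrpCat.{0}, SatisfiesLaws ↥K U ∧ ¬ SatisfiesLaws ↥K W) :
    ∃ H : GrpCat.{0}, Finite ↥H ∧ SatisfiesLaws ↥H U ∧ ¬ SatisfiesLaws ↥H W ∧
      ∃ G : GrpCat.{0}, Finite ↥G ∧
        ∃ Htilde : Subgroup ↥G, IsSubnormalSubgroup Htilde ∧
          Nonempty (↥H ≃* ↥Htilde) ∧ Htilde ≤ verbalSubgroup ↥G V := by
  classical
  -- Step A: a finite group H₀ satisfying U but not W
  obtain ⟨K, hKU, hKW⟩ := hproper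
  rw [SatisfiesLaws] at hKW
  push_neg at hKW
  obtain ⟨ψ, w₀, hw₀W, hψw₀⟩ := hKW
  obtain ⟨T, hTsub, hwT⟩ := exists_finset_subset_closure (freeGroup_mem_closure_range_of w₀)
  set H₀s : Subgroup ↥K := Subgroup.closure (ψ '' (T : Set (FreeGroup ℕ))) with hH₀sdef
  set ψ' : FreeGroup ℕ →* ↥H₀s := FreeGroup.lift (fun i =>
    if h : FreeGroup.of i ∈ (T : Set (FreeGroup ℕ)) then
      ⟨ψ (FreeGroup.of i), Subgroup.subset_closure ⟨_, h, rfl⟩⟩ else 1) with hψ'def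
  have hcomp : ∀ x ∈ Subgroup.closure ((T : Set (FreeGroup ℕ))),
      (H₀s.subtype.comp ψ') x = ψ x := by
    intro x hx
    induction hx using Subgroup.closure_induction with
    | mem y hy =>
        obtain ⟨i, rfl⟩ := hTsub hy
        rw [MonoidHom.comp_apply, hψ'def, FreeGroup.lift_apply_of, dif_pos hy]
        rfl
    | one => simp
    | mul a b ha hb iha ihb => rw [map_mul, map_mul, iha, ihb]
    | inv a ha iha => rw [map_inv, map_inv, iha]
  have hψ'w₀ : ψ' w₀ ≠ 1 := by
    intro hh
    apply hψw₀
    rw [← hcomp w₀ hwT, MonoidHom.comp_apply, hh, map_one]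
  have hH₀U : SatisfiesLaws ↥H₀s U :=
    satisfiesLaws_of_injective H₀s.subtype H₀s.subtype_injective hKU
  have finHelper : ∀ (X : Type) [Group X], Group.FG X → SatisfiesLaws X U → Finite X := by
    intro X _ hfg hlaws
    haveI := hfg
    haveI : Group.FG (ULift.{v} X) :=
      Group.fg_of_surjective (f := (MulEquiv.ulift.symm : X ≃* ULift.{v} X).toMonoidHom)
        (MulEquiv.ulift.symm.surjective)
    have h2 : SatisfiesLaws (ULift.{v} X) U :=
      satisfiesLaws_of_injective ((MulEquiv.ulift : ULift.{v} X ≃* X).toMonoidHom)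
        (fun a b hab => MulEquiv.ulift.injective hab) hlaws
    haveI h3 := hUlf (ULift.{v} X) inferInstance h2
    exact Finite.of_equiv _ Equiv.ulift
  haveI hH₀fin : Finite ↥H₀s := finHelper ↥H₀s ((Group.fg_iff_subgroup_fg H₀s).2
      ((Subgroup.fg_iff H₀s).2 ⟨ψ '' ↑T, hH₀sdef.symm, T.finite_toSet.image _⟩)) hH₀U
  -- Step B: the exponent m
  have hAne : verbalSubgroup (Multiplicative ℤ) V ≠ ⊥ := by
    intro hbot
    haveI hZfg : Group.FG (Multiplicative ℤ) := by
      rw [Group.fg_iff]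
      refine ⟨{Multiplicative.ofAdd 1}, ?_, Set.finite_singleton _⟩
      rw [Subgroup.eq_top_iff']
      intro x
      rw [Subgroup.mem_closure_singleton]
      exact ⟨x.toAdd, by rw [← ofAdd_zsmul, smul_eq_mul, mul_one, ofAdd_toAdd]⟩
    haveI hfgU : Group.FG (ULift.{v} (Multiplicative ℤ)) :=
      Group.fg_of_surjective
        (f := (MulEquiv.ulift.symm : Multiplicative ℤ ≃* ULift.{v} (Multiplicative ℤ)).toMonoidHom)
        (MulEquiv.ulift.symm.surjective)
    have hbotU : verbalSubgroup (ULift.{v} (Multiplicative ℤ)) V = ⊥ := by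
      rw [verbalSubgroup, Subgroup.closure_eq_bot_iff]
      rintro g ⟨w, hwV, φ, rfl⟩
      have h1 : (MulEquiv.ulift.toMonoidHom.comp φ) w ∈ verbalSubgroup (Multiplicative ℤ) V :=
        Subgroup.subset_closure ⟨w, hwV, _, rfl⟩
      rw [hbot, Subgroup.mem_bot] at h1
      have h2 : φ w = 1 := MulEquiv.ulift.injective (by simpa using h1)
      simp [h2]
    haveI hfin := hVlf (ULift.{v} (Multiplicative ℤ)) hfgU hbotU
    exact not_finite (ULift.{v} (Multiplicative ℤ))
  obtain ⟨a, ha⟩ := Int.subgroup_cyclic (Subgroup.toAddSubgroup' (verbalSubgroup (Multiplicative ℤ) V))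
  have hmemA : ∀ x : ℤ, Multiplicative.ofAdd x ∈ verbalSubgroup (Multiplicative ℤ) V ↔
      x ∈ AddSubgroup.closure ({a} : Set ℤ) := by
    intro x
    rw [← ha]
    exact Iff.rfl
  have ha0 : a ≠ 0 := by
    intro h0
    apply hAne
    ext x
    simp only [Subgroup.mem_bot]
    constructor
    · intro hx
      have h1 := (hmemA x.toAdd).1 (by simpa using hx)
      rw [h0] at h1
      obtain ⟨n, hn⟩ := AddSubgroup.mem_closure_singleton.mp h1
      rw [smul_zero] at hn
      have : x.toAdd = 0 := hn.symm
      simpa using congrArg Multiplicative.ofAdd this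
    · rintro rfl
      exact one_mem _
  set m : ℕ := a.natAbs with hmdef
  have hm0 : m ≠ 0 := Int.natAbs_ne_zero.mpr ha0
  haveI : NeZero m := ⟨hm0⟩
  have hascl : (a : ℤ) ∈ AddSubgroup.closure ({a} : Set ℤ) :=
    AddSubgroup.mem_closure_singleton.mpr ⟨1, one_smul _ _⟩
  have hmA : Multiplicative.ofAdd (m : ℤ) ∈ verbalSubgroup (Multiplicative ℤ) V := by
    rw [hmemA]
    rcases Int.natAbs_eq a with h | h
    · rw [← h]; exact hascl
    · have : ((m : ℤ)) = -a := by omega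
      rw [this]; exact neg_mem hascl
  have hdvd : ∀ x : Multiplicative ℤ, x ∈ verbalSubgroup (Multiplicative ℤ) V →
      (m : ℤ) ∣ x.toAdd := by
    intro x hx
    obtain ⟨n, hn⟩ := AddSubgroup.mem_closure_singleton.mp ((hmemA x.toAdd).1 (by simpa using hx))
    rw [← hn, smul_eq_mul]
    exact Dvd.dvd.mul_left (Int.natAbs_dvd.mpr dvd_rfl) n
  -- the power trick
  have hpow : ∀ (X : Type) [Group X] (g : X), g ^ m ∈ verbalSubgroup X V := by
    intro X _ g
    have h1 : (zpowersHom X g) (Multiplicative.ofAdd (m : ℤ)) ∈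
        (verbalSubgroup (Multiplicative ℤ) V).map (zpowersHom X g) :=
      Subgroup.mem_map.mpr ⟨_, hmA, rfl⟩
    have h2 := verbal_map_le (zpowersHom X g) V h1
    rwa [zpowersHom_apply, toAdd_ofAdd, zpow_natCast] at h2
  -- C_m satisfies the laws V
  have hCmV : SatisfiesLaws (Multiplicative (ZMod m)) V := by
    intro φ w hwV
    set z : ℕ → Multiplicative ℤ := fun i =>
      Multiplicative.ofAdd (((Multiplicative.toAdd (φ (FreeGroup.of i))).val : ℕ) : ℤ) with hz
    set π : Multiplicative ℤ →* Multiplicative (ZMod m) :=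
      AddMonoidHom.toMultiplicative (Int.castAddHom (ZMod m)) with hπ
    have hπφ : π.comp (FreeGroup.lift z) = φ := by
      apply FreeGroup.ext_hom
      intro i
      rw [MonoidHom.comp_apply, FreeGroup.lift_apply_of, hz]
      show Multiplicative.ofAdd
        ((((Multiplicative.toAdd (φ (FreeGroup.of i))).val : ℕ) : ℤ) : ZMod m) = φ (FreeGroup.of i)
      rw [Int.cast_natCast, ZMod.natCast_rightInverse (Multiplicative.toAdd (φ (FreeGroup.of i)))]
      simp
    have hval : (FreeGroup.lift z) w ∈ verbalSubgroup (Multiplicative ℤ) V :=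
      Subgroup.subset_closure ⟨w, hwV, _, rfl⟩
    obtain ⟨k, hk⟩ := hdvd _ hval
    have h8 : φ w = π ((FreeGroup.lift z) w) := by rw [← hπφ]; rfl
    rw [h8]
    show Multiplicative.ofAdd (((Multiplicative.toAdd ((FreeGroup.lift z) w)) : ℤ) : ZMod m) = 1
    rw [hk]
    push_cast
    simp [ZMod.natCast_self]
  exact embed_construction U V W m hpow hCmV ↥H₀s hH₀U w₀ hw₀W ψ' hψ'w₀
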